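/- Let N, k ≥ 1 be integers, and let z : ℝ^N → ℝ be measurable with 1 < z₋ ≤ z(x) ≤ z₊ < ∞ for a.e. x ∈ ℝ^N (with Lebesgue measure). Let (η_n) and η be measurable functions from ℝ^N to ℝ^k such that η_n(x) → η(x) for a.e. x ∈ ℝ^N and sup_n ∫_{ℝ^N} |η_n(x)|^{z(x)} dx < ∞. Then, with z'(x) = z(x)/(z(x)−1), the integral over the region where z(x) ≥ 2 satisfies ∫_{{x ∈ ℝ^N : z(x) ≥ 2}} | |η_n(x)|^{z(x)−2} η_n(x) − |η_n(x)−η(x)|^{z(x)−2} (η_n(x)−η(x)) − |η(x)|^{z(x)−2} η(x) |^{z'(x)} dx → 0 as n → ∞. -/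

import Mathlib

/-!
On `{z ≥ 2}` the map `J_p y = |y|^{p-2} y` satisfies
`|J_p u - J_p v| ≤ (p-1) (|u| + |v|)^{p-2} |u - v|` by the mean value theorem. Splitting according
to whether `|b| ≤ δ |a - b|`, this gives, uniformly in `2 ≤ p ≤ z₊`,
`|J_p a - J_p (a - b) - J_p b|^{p'} ≤ ε |a - b|^p + C_ε |b|^p`.
Take `a = η_n`, `b = η`: the integrals of `|η_n - η|^z` are bounded, `|η|^z` is integrable by
Fatou, so the positive part of the integrand minus `ε |η_n - η|^z` tends to `0` in `L¹` by
dominated convergence, and `ε` is arbitrary.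
-/

open MeasureTheory Filter Topology Asymptotics

section DualityMap

variable {E : Type*} [NormedAddCommGroup E] [InnerProductSpace ℝ E] {p : ℝ}

noncomputable def dualityMap (p : ℝ) (y : E) : E := ‖y‖ ^ (p - 2) • y

@[simp]
theorem dualityMap_zero (p : ℝ) : dualityMap p (0 : E) = 0 := by simp [dualityMap]

theorem norm_dualityMap (hp : p ≠ 1) (y : E) : ‖dualityMap p y‖ = ‖y‖ ^ (p - 1) := by
  rcases eq_or_ne y 0 with rfl | hy
  · simp [Real.zero_rpow (sub_ne_zero.2 hp)]
  · rw [dualityMap, norm_smul, Real.norm_of_nonneg (by positivity), ← Real.rpow_add_one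
      (norm_ne_zero_iff.2 hy)]
    ring_nf

theorem continuous_dualityMap (hp : 2 ≤ p) : Continuous (dualityMap (E := E) p) :=
  (continuous_norm.rpow_const fun _ => Or.inr (by linarith)).smul continuous_id

theorem hasFDerivAt_dualityMap_zero (hp : 2 < p) :
    HasFDerivAt (dualityMap (E := E) p) (0 : E →L[ℝ] E) 0 := by
  refine .of_isLittleO ?_
  simp only [dualityMap_zero, sub_zero, zero_apply]
  rw [← isLittleO_norm_left]
  calc (fun y : E => ‖dualityMap p y‖)
      = fun y : E => ‖y‖ ^ (p - 2) * ‖y‖ := by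
        ext y; rw [dualityMap, norm_smul, Real.norm_of_nonneg (by positivity)]
    _ =o[𝓝 0] fun y : E => (1 : ℝ) * ‖y‖ := by
        refine IsLittleO.mul_isBigO ((isLittleO_const_iff one_ne_zero).2 ?_) (isBigO_refl _ _)
        simpa [Real.zero_rpow (by linarith : p - 2 ≠ 0)] using
          (continuous_norm.rpow_const fun _ => Or.inr (by linarith : 0 ≤ p - 2)).tendsto (0 : E)
    _ =O[𝓝 0] fun y : E => y := by simpa using (isBigO_refl (fun y : E => y) (𝓝 0)).norm_left

theorem exists_hasFDerivAt_dualityMap_of_ne_zero (hp : 2 ≤ p) {y : E} (hy : y ≠ 0) :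
    ∃ D : E →L[ℝ] E, HasFDerivAt (dualityMap p) D y ∧ ‖D‖ ≤ (p - 1) * ‖y‖ ^ (p - 2) := by
  have hy' : ‖y‖ ≠ 0 := norm_ne_zero_iff.2 hy
  set n' := fderiv ℝ (norm : E → ℝ) y
  have hn' : ‖n'‖ ≤ 1 := by
    simpa using norm_fderiv_le_of_lipschitz ℝ (lipschitzWith_one_norm (E := E)) (x₀ := y)
  have hr : HasFDerivAt (fun w : E => ‖w‖ ^ (p - 2)) (((p - 2) * ‖y‖ ^ (p - 2 - 1)) • n') y :=
    (Real.hasDerivAt_rpow_const (Or.inl hy')).comp_hasFDerivAt y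
      ((contDiffAt_norm ℝ hy).differentiableAt one_ne_zero).hasFDerivAt
  refine ⟨_, hr.smul (hasFDerivAt_id y), ?_⟩
  have hpow : ‖y‖ ^ (p - 2 - 1) * ‖y‖ = ‖y‖ ^ (p - 2) := by
    rw [← Real.rpow_add_one hy']; ring_nf
  calc _ ≤ ‖‖y‖ ^ (p - 2) • ContinuousLinearMap.id ℝ E‖
        + ‖(((p - 2) * ‖y‖ ^ (p - 2 - 1)) • n').smulRight y‖ := norm_add_le _ _
    _ ≤ ‖y‖ ^ (p - 2) * 1 + ((p - 2) * ‖y‖ ^ (p - 2 - 1) * 1) * ‖y‖ := by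
        rw [ContinuousLinearMap.norm_smulRight_apply, norm_smul, norm_smul,
          Real.norm_of_nonneg (by positivity),
          Real.norm_of_nonneg (mul_nonneg (by linarith) (by positivity))]
        gcongr
        exact ContinuousLinearMap.norm_id_le
    _ = (p - 1) * ‖y‖ ^ (p - 2) := by linear_combination (p - 2) * hpow

theorem exists_hasFDerivAt_dualityMap (hp : 2 < p) (y : E) :
    ∃ D : E →L[ℝ] E, HasFDerivAt (dualityMap p) D y ∧ ‖D‖ ≤ (p - 1) * ‖y‖ ^ (p - 2) := by
  rcases eq_or_ne y 0 with rfl | hy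
  · refine ⟨0, hasFDerivAt_dualityMap_zero hp, ?_⟩
    rw [norm_zero]
    exact mul_nonneg (by linarith) (by positivity)
  · exact exists_hasFDerivAt_dualityMap_of_ne_zero hp.le hy

theorem norm_dualityMap_sub_le (hp : 2 ≤ p) (u v : E) :
    ‖dualityMap p u - dualityMap p v‖ ≤ (p - 1) * (‖u‖ + ‖v‖) ^ (p - 2) * ‖u - v‖ := by
  rcases hp.eq_or_lt with rfl | hp
  · norm_num [dualityMap]
  choose D hD hDle using exists_hasFDerivAt_dualityMap (E := E) hp
  have mem_ball : ∀ {w : E}, ‖w‖ ≤ ‖u‖ + ‖v‖ → w ∈ Metric.closedBall 0 (‖u‖ + ‖v‖) := by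
    simp
  refine (convex_closedBall (0 : E) _).norm_image_sub_le_of_norm_hasFDerivWithin_le
    (fun y _ => (hD y).hasFDerivWithinAt) (fun y hy => (hDle y).trans ?_)
    (mem_ball (le_add_of_nonneg_left (norm_nonneg u)))
    (mem_ball (le_add_of_nonneg_right (norm_nonneg v)))
  have : ‖y‖ ≤ ‖u‖ + ‖v‖ := by simpa using hy
  gcongr
  linarith

theorem norm_dualityMap_sub_sub_le (hp : 2 ≤ p) {P R : ℝ} (hpP : p ≤ P) (a b : E)
    (hbR : ‖b‖ ≤ R) (habR : 2 * ‖a - b‖ + ‖b‖ ≤ 3 * R) :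
    ‖dualityMap p a - dualityMap p (a - b) - dualityMap p b‖
      ≤ (P * 3 ^ P + 1) * R ^ (p - 2) * ‖b‖ := by
  have hR : 0 ≤ R := (norm_nonneg b).trans hbR
  have ha : ‖a‖ + ‖a - b‖ ≤ 3 * R := by
    linarith [norm_le_norm_sub_add a b]
  have h3 : (3 * R) ^ (p - 2) ≤ 3 ^ P * R ^ (p - 2) := by
    rw [Real.mul_rpow (by norm_num) hR]
    gcongr
    · norm_num
    · linarith
  have hb : ‖b‖ ^ (p - 1) ≤ R ^ (p - 2) * ‖b‖ := by
    rw [show p - 1 = (p - 2) + 1 by ring, Real.rpow_add_one' (norm_nonneg b) (by linarith)]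
    gcongr
  calc _ ≤ ‖dualityMap p a - dualityMap p (a - b)‖ + ‖dualityMap p b‖ := norm_sub_le _ _
    _ ≤ (p - 1) * (‖a‖ + ‖a - b‖) ^ (p - 2) * ‖b‖ + ‖b‖ ^ (p - 1) := by
        grw [norm_dualityMap_sub_le hp, sub_sub_cancel, norm_dualityMap (by linarith)]
    _ ≤ P * (3 ^ P * R ^ (p - 2)) * ‖b‖ + R ^ (p - 2) * ‖b‖ := by
        have h : (‖a‖ + ‖a - b‖) ^ (p - 2) ≤ 3 ^ P * R ^ (p - 2) :=
          (Real.rpow_le_rpow (by positivity) ha (by linarith)).trans h3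
        gcongr <;> linarith
    _ = (P * 3 ^ P + 1) * R ^ (p - 2) * ‖b‖ := by ring

theorem rpow_div_sub_one_le_of_le_mul_rpow {p c x d : ℝ} (hp : 1 < p) (hd : 0 ≤ d) (hc : 0 ≤ c)
    (hx : 0 ≤ x) (h : d ≤ c * x ^ (p - 1)) :
    d ^ (p / (p - 1)) ≤ c ^ (p / (p - 1)) * x ^ p := by
  calc d ^ (p / (p - 1)) ≤ (c * x ^ (p - 1)) ^ (p / (p - 1)) :=
        Real.rpow_le_rpow hd h (div_nonneg (by linarith) (by linarith))
    _ = c ^ (p / (p - 1)) * x ^ p := by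
        rw [Real.mul_rpow hc (by positivity), ← Real.rpow_mul hx,
          mul_div_cancel₀ _ (by linarith : p - 1 ≠ 0)]

theorem norm_dualityMap_sub_sub_le_of_le_mul (hp : 2 ≤ p) {P δ : ℝ} (hpP : p ≤ P) (hδ1 : δ ≤ 1)
    {a b : E} (hb : ‖b‖ ≤ δ * ‖a - b‖) :
    ‖dualityMap p a - dualityMap p (a - b) - dualityMap p b‖
      ≤ (P * 3 ^ P + 1) * δ * ‖a - b‖ ^ (p - 1) := by
  have hR : ‖b‖ ≤ ‖a - b‖ := hb.trans (mul_le_of_le_one_left (norm_nonneg _) hδ1)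
  have hK : 0 ≤ P * 3 ^ P + 1 := by nlinarith [show (0 : ℝ) < 3 ^ P by positivity]
  calc _ ≤ (P * 3 ^ P + 1) * ‖a - b‖ ^ (p - 2) * ‖b‖ :=
        norm_dualityMap_sub_sub_le hp hpP a b hR (by linarith)
    _ ≤ (P * 3 ^ P + 1) * ‖a - b‖ ^ (p - 2) * (δ * ‖a - b‖) := by gcongr
    _ = (P * 3 ^ P + 1) * δ * ‖a - b‖ ^ (p - 1) := by
        rw [show p - 1 = p - 2 + 1 by ring, Real.rpow_add_one' (norm_nonneg _) (by linarith)]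
        ring

theorem norm_dualityMap_sub_sub_le_of_mul_lt (hp : 2 ≤ p) {P δ : ℝ} (hpP : p ≤ P) (hδ : 0 < δ)
    (hδ1 : δ ≤ 1) {a b : E} (hb : δ * ‖a - b‖ < ‖b‖) :
    ‖dualityMap p a - dualityMap p (a - b) - dualityMap p b‖
      ≤ (P * 3 ^ P + 1) / δ ^ P * ‖b‖ ^ (p - 1) := by
  have hab : ‖a - b‖ ≤ ‖b‖ / δ := by rw [le_div_iff₀ hδ]; linarith
  have hR : ‖b‖ ≤ ‖b‖ / δ := le_div_self (norm_nonneg _) hδ hδ1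
  have hK : 0 ≤ P * 3 ^ P + 1 := by nlinarith [show (0 : ℝ) < 3 ^ P by positivity]
  have hδP : δ ^ P ≤ δ ^ (p - 2) := Real.rpow_le_rpow_of_exponent_ge hδ hδ1 (by linarith)
  calc _ ≤ (P * 3 ^ P + 1) * (‖b‖ / δ) ^ (p - 2) * ‖b‖ :=
        norm_dualityMap_sub_sub_le hp hpP a b hR (by linarith)
    _ = (P * 3 ^ P + 1) / δ ^ (p - 2) * ‖b‖ ^ (p - 1) := by
        rw [Real.div_rpow (norm_nonneg _) hδ.le, show p - 1 = p - 2 + 1 by ring,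
          Real.rpow_add_one' (norm_nonneg _) (by linarith)]
        ring
    _ ≤ (P * 3 ^ P + 1) / δ ^ P * ‖b‖ ^ (p - 1) := by gcongr

theorem exists_norm_dualityMap_sub_sub_rpow_le (P : ℝ) {ε : ℝ} (hε : 0 < ε) :
    ∃ C : ℝ, ∀ p, 2 ≤ p → p ≤ P → ∀ a b : E,
      ‖dualityMap p a - dualityMap p (a - b) - dualityMap p b‖ ^ (p / (p - 1))
        ≤ ε * ‖a - b‖ ^ p + C * ‖b‖ ^ p := by
  rcases lt_or_ge P 2 with hP | hP
  · exact ⟨0, fun p hp hpP => absurd (hp.trans hpP) hP.not_ge⟩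
  set K := P * 3 ^ P + 1
  have hK : 1 ≤ K := by linarith [show 0 ≤ P * 3 ^ P by positivity]
  set δ := min ε 1 / K
  have hδ : 0 < δ := by positivity
  have hδ1 : δ ≤ 1 := div_le_one_of_le₀ ((min_le_right _ _).trans hK) (by linarith)
  have hKδ : K * δ = min ε 1 := mul_div_cancel₀ _ (by linarith)
  have hKδP : 1 ≤ K / δ ^ P := by
    rw [le_div_iff₀ (by positivity)]
    linarith [Real.rpow_le_one hδ.le hδ1 (by linarith : 0 ≤ P)]
  refine ⟨(K / δ ^ P) ^ (2 : ℝ), fun p hp hpP a b => ?_⟩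
  have hq1 : 1 ≤ p / (p - 1) := by rw [le_div_iff₀ (by linarith)]; linarith
  have hq2 : p / (p - 1) ≤ 2 := by rw [div_le_iff₀ (by linarith)]; linarith
  have hε_term : 0 ≤ ε * ‖a - b‖ ^ p := by positivity
  have hC_term : 0 ≤ (K / δ ^ P) ^ (2 : ℝ) * ‖b‖ ^ p := by positivity
  rcases le_or_gt ‖b‖ (δ * ‖a - b‖) with hb | hb
  · have hc : (K * δ) ^ (p / (p - 1)) ≤ ε := by
      rw [hKδ]
      exact (Real.rpow_le_self_of_le_one (by positivity) (min_le_right _ _) hq1).trans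
        (min_le_left _ _)
    calc _ ≤ (K * δ) ^ (p / (p - 1)) * ‖a - b‖ ^ p :=
          rpow_div_sub_one_le_of_le_mul_rpow (by linarith) (norm_nonneg _) (by positivity)
            (norm_nonneg _) (norm_dualityMap_sub_sub_le_of_le_mul hp hpP hδ1 hb)
      _ ≤ ε * ‖a - b‖ ^ p := by gcongr
      _ ≤ _ := le_add_of_nonneg_right hC_term
  · calc _ ≤ (K / δ ^ P) ^ (p / (p - 1)) * ‖b‖ ^ p :=
          rpow_div_sub_one_le_of_le_mul_rpow (by linarith) (norm_nonneg _) (by positivity)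
            (norm_nonneg _) (norm_dualityMap_sub_sub_le_of_mul_lt hp hpP hδ hδ1 hb)
      _ ≤ (K / δ ^ P) ^ (2 : ℝ) * ‖b‖ ^ p := by gcongr
      _ ≤ _ := le_add_of_nonneg_left hε_term

theorem tendsto_norm_dualityMap_sub_sub_rpow (hp : 2 ≤ p) {a : ℕ → E} {b : E}
    (ha : Tendsto a atTop (𝓝 b)) :
    Tendsto (fun n => ‖dualityMap p (a n) - dualityMap p (a n - b) - dualityMap p b‖
      ^ (p / (p - 1))) atTop (𝓝 0) := by
  have hJ := continuous_dualityMap (E := E) hp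
  have h0 : Tendsto (fun n => a n - b) atTop (𝓝 0) := by simpa using ha.sub_const b
  have hq : 0 < p / (p - 1) := div_pos (by linarith) (by linarith)
  simpa [Real.zero_rpow hq.ne'] using
    ((((hJ.tendsto b).comp ha).sub ((hJ.tendsto 0).comp h0)).sub_const (dualityMap p b)).norm
      |>.rpow_const (Or.inr hq.le)

end DualityMap

theorem rpow_norm_sub_le {E : Type*} [SeminormedAddCommGroup E] {p P : ℝ} (hp : 1 ≤ p)
    (hpP : p ≤ P) (u v : E) : ‖u - v‖ ^ p ≤ 2 ^ (P - 1) * (‖u‖ ^ p + ‖v‖ ^ p) := by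
  have h : (‖u‖ + ‖v‖) ^ p ≤ 2 ^ (p - 1) * (‖u‖ ^ p + ‖v‖ ^ p) := by
    exact_mod_cast NNReal.rpow_add_le_mul_rpow_add_rpow ‖u‖₊ ‖v‖₊ hp
  calc ‖u - v‖ ^ p ≤ (‖u‖ + ‖v‖) ^ p := by gcongr; exact norm_sub_le u v
    _ ≤ 2 ^ (p - 1) * (‖u‖ ^ p + ‖v‖ ^ p) := h
    _ ≤ 2 ^ (P - 1) * (‖u‖ ^ p + ‖v‖ ^ p) := by gcongr; norm_num

section Integral

variable {α : Type*} [MeasurableSpace α] {μ : Measure α}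

theorem integrable_of_tendsto_of_integral_le {f : ℕ → α → ℝ} {g : α → ℝ} {C : ℝ}
    (hf : ∀ n, Integrable (f n) μ) (hf₀ : ∀ n, 0 ≤ᵐ[μ] f n) (hC : ∀ n, ∫ x, f n x ∂μ ≤ C)
    (hlim : ∀ᵐ x ∂μ, Tendsto (fun n => f n x) atTop (𝓝 (g x))) : Integrable g μ := by
  rw [← memLp_one_iff_integrable]
  refine ⟨aestronglyMeasurable_of_tendsto_ae _ (fun n => (hf n).1) hlim,
    (Lp.eLpNorm_le_of_ae_tendsto (C := ENNReal.ofReal C) (.of_forall fun n => ?_)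
      (fun n => (hf n).1) hlim).trans_lt ENNReal.ofReal_lt_top⟩
  rw [eLpNorm_one_eq_lintegral_enorm, ← ofReal_integral_norm_eq_lintegral_enorm (hf n)]
  refine ENNReal.ofReal_le_ofReal ((integral_congr_ae ?_).trans_le (hC n))
  filter_upwards [hf₀ n] with x hx using Real.norm_of_nonneg hx

theorem tendsto_integral_zero_of_le_eps_mul_add {f t : ℕ → α → ℝ} {g : α → ℝ} {M : ℝ}
    (hf : ∀ n, AEStronglyMeasurable (f n) μ) (hf₀ : ∀ n, 0 ≤ᵐ[μ] f n)
    (hf_lim : ∀ᵐ x ∂μ, Tendsto (fun n => f n x) atTop (𝓝 0))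
    (ht : ∀ n, Integrable (t n) μ) (ht₀ : ∀ n, 0 ≤ᵐ[μ] t n) (htM : ∀ n, ∫ x, t n x ∂μ ≤ M)
    (hg : Integrable g μ)
    (hbound : ∀ ε > 0, ∃ C, ∀ n, ∀ᵐ x ∂μ, f n x ≤ ε * t n x + C * g x) :
    Tendsto (fun n => ∫ x, f n x ∂μ) atTop (𝓝 0) := by
  refine tendsto_order.2 ⟨fun a ha => .of_forall fun n =>
    ha.trans_le (integral_nonneg_of_ae (hf₀ n)), fun a ha => ?_⟩
  obtain ⟨ε, hε, hεM⟩ : ∃ ε > 0, ε * M < a := by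
    refine ⟨a / (|M| + 1), by positivity, ?_⟩
    calc a / (|M| + 1) * M ≤ a / (|M| + 1) * |M| := by gcongr; exact le_abs_self M
      _ < a / (|M| + 1) * (|M| + 1) := by gcongr; linarith
      _ = a := div_mul_cancel₀ _ (by positivity)
  obtain ⟨C, hC⟩ := hbound ε hε
  set G : ℕ → α → ℝ := fun n x => max (f n x - ε * t n x) 0
  have hGm : ∀ n, AEStronglyMeasurable (G n) μ := fun n =>
    ((hf n).sub ((ht n).1.const_mul ε)).sup aestronglyMeasurable_const
  have hdom : ∀ n, ∀ᵐ x ∂μ, ‖G n x‖ ≤ ‖C * g x‖ := fun n => by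
    filter_upwards [hC n] with x hx
    rw [Real.norm_of_nonneg (le_max_right _ _)]
    exact max_le (by linarith [Real.le_norm_self (C * g x)]) (norm_nonneg _)
  have hGi : ∀ n, Integrable (G n) μ := fun n => (hg.const_mul C).norm.mono' (hGm n) (hdom n)
  have hG_lim : Tendsto (fun n => ∫ x, G n x ∂μ) atTop (𝓝 0) := by
    have hG_lim : ∀ᵐ x ∂μ, Tendsto (fun n => G n x) atTop (𝓝 0) := by
      filter_upwards [hf_lim, ae_all_iff.2 hf₀, ae_all_iff.2 ht₀] with x hx hf₀x ht₀x
      refine squeeze_zero (fun n => le_max_right _ _) (fun n => max_le ?_ (hf₀x n)) hx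
      linarith [mul_nonneg hε.le (ht₀x n)]
    simpa using tendsto_integral_of_dominated_convergence _ hGm (hg.const_mul C).norm hdom hG_lim
  have hle : ∀ n, ∫ x, f n x ∂μ ≤ ∫ x, G n x ∂μ + ε * M := fun n => by
    calc ∫ x, f n x ∂μ ≤ ∫ x, G n x + ε * t n x ∂μ :=
          integral_mono_of_nonneg (hf₀ n) ((hGi n).add ((ht n).const_mul ε))
            (.of_forall fun x => by linarith [le_max_left (f n x - ε * t n x) 0])
      _ = ∫ x, G n x ∂μ + ε * ∫ x, t n x ∂μ := by
          rw [integral_add (hGi n) ((ht n).const_mul ε), integral_const_mul]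
      _ ≤ ∫ x, G n x ∂μ + ε * M := by gcongr; exact htM n
  filter_upwards [hG_lim.eventually (gt_mem_nhds (sub_pos.2 hεM))] with n hn
  linarith [hle n]

section RpowNormSub

variable {E : Type*} [NormedAddCommGroup E] {u v : α → E} {p : α → ℝ} {P : ℝ}

theorem integrable_rpow_norm_sub (hu : AEStronglyMeasurable u μ) (hv : AEStronglyMeasurable v μ)
    (hp : AEMeasurable p μ)
    (hpP : ∀ᵐ x ∂μ, 1 ≤ p x ∧ p x ≤ P) (hu' : Integrable (fun x => ‖u x‖ ^ p x) μ)
    (hv' : Integrable (fun x => ‖v x‖ ^ p x) μ) :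
    Integrable (fun x => ‖u x - v x‖ ^ p x) μ := by
  refine ((hu'.add hv').const_mul (2 ^ (P - 1))).mono'
    ((hu.sub hv).norm.aemeasurable.pow hp).aestronglyMeasurable ?_
  filter_upwards [hpP] with x hx
  rw [Real.norm_of_nonneg (by positivity)]
  exact rpow_norm_sub_le hx.1 hx.2 (u x) (v x)

theorem integral_rpow_norm_sub_le (hu : AEStronglyMeasurable u μ) (hv : AEStronglyMeasurable v μ)
    (hp : AEMeasurable p μ)
    (hpP : ∀ᵐ x ∂μ, 1 ≤ p x ∧ p x ≤ P) (hu' : Integrable (fun x => ‖u x‖ ^ p x) μ)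
    (hv' : Integrable (fun x => ‖v x‖ ^ p x) μ) :
    ∫ x, ‖u x - v x‖ ^ p x ∂μ
      ≤ 2 ^ (P - 1) * (∫ x, ‖u x‖ ^ p x ∂μ + ∫ x, ‖v x‖ ^ p x ∂μ) := by
  rw [← integral_add hu' hv', ← integral_const_mul]
  refine integral_mono_ae (integrable_rpow_norm_sub hu hv hp hpP hu' hv')
    ((hu'.add hv').const_mul _) ?_
  filter_upwards [hpP] with x hx
  exact rpow_norm_sub_le hx.1 hx.2 (u x) (v x)

end RpowNormSub

end Integral

theorem brezis_lieb_third_version_region_two_general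
    (N k : ℕ)
    (z : EuclideanSpace ℝ (Fin N) → ℝ) (hz : Measurable z)
    (zm zp : ℝ)
    (hzbound : ∀ᵐ x : EuclideanSpace ℝ (Fin N), zm ≤ z x ∧ z x ≤ zp)
    (η : ℕ → EuclideanSpace ℝ (Fin N) → EuclideanSpace ℝ (Fin k))
    (ηlim : EuclideanSpace ℝ (Fin N) → EuclideanSpace ℝ (Fin k))
    (hηm : ∀ n, Measurable (η n)) (hηlimm : Measurable ηlim)
    (hconv : ∀ᵐ x : EuclideanSpace ℝ (Fin N),
      Tendsto (fun n => η n x) atTop (𝓝 (ηlim x)))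
    (hint : ∀ n, Integrable (fun x => ‖η n x‖ ^ z x))
    (hsup : ∃ C : ℝ, ∀ n, ∫ x, ‖η n x‖ ^ z x ≤ C) :
    Tendsto
      (fun n => ∫ x in {x : EuclideanSpace ℝ (Fin N) | 2 ≤ z x},
        ‖(‖η n x‖ ^ (z x - 2)) • η n x
          - (‖η n x - ηlim x‖ ^ (z x - 2)) • (η n x - ηlim x)
          - (‖ηlim x‖ ^ (z x - 2)) • ηlim x‖ ^ (z x / (z x - 1)))
      atTop (𝓝 0) := by
  obtain ⟨C₀, hC₀⟩ := hsup
  set S := {x : EuclideanSpace ℝ (Fin N) | 2 ≤ z x}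
  have hzS : ∀ᵐ x ∂volume.restrict S, 2 ≤ z x ∧ z x ≤ zp := by
    filter_upwards [ae_restrict_mem (measurableSet_le measurable_const hz),
      ae_restrict_of_ae hzbound] with x h2 hx using ⟨h2, hx.2⟩
  have hzS_one : ∀ᵐ x ∂volume.restrict S, 1 ≤ z x ∧ z x ≤ zp := by
    filter_upwards [hzS] with x hx using ⟨by linarith [hx.1], hx.2⟩
  have hintS : ∀ n, Integrable (fun x => ‖η n x‖ ^ z x) (volume.restrict S) :=
    fun n => (hint n).restrict
  have hC₀S : ∀ n, ∫ x in S, ‖η n x‖ ^ z x ≤ C₀ := fun n =>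
    (setIntegral_le_integral (hint n) (.of_forall fun x => by positivity)).trans (hC₀ n)
  have hηlim_int : Integrable (fun x => ‖ηlim x‖ ^ z x) (volume.restrict S) :=
    integrable_of_tendsto_of_integral_le hintS (fun n => .of_forall fun x => by positivity) hC₀S
      (by filter_upwards [ae_restrict_of_ae hconv, hzS] with x hx hzx
          exact hx.norm.rpow_const (Or.inr (by linarith [hzx.1])))
  refine tendsto_integral_zero_of_le_eps_mul_add
    (t := fun n x => ‖η n x - ηlim x‖ ^ z x)
    (M := 2 ^ (zp - 1) * (C₀ + ∫ x in S, ‖ηlim x‖ ^ z x)) ?_ ?_ ?_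
    (fun n => integrable_rpow_norm_sub (hηm n).aestronglyMeasurable
      hηlimm.aestronglyMeasurable hz.aemeasurable hzS_one (hintS n) hηlim_int)
    (fun n => .of_forall fun x => by positivity) (fun n => ?_) hηlim_int (fun ε hε => ?_)
  · exact fun n => Measurable.aestronglyMeasurable (by fun_prop)
  · exact fun n => .of_forall fun x => by positivity
  · filter_upwards [ae_restrict_of_ae hconv, hzS] with x hx hzx
    exact tendsto_norm_dualityMap_sub_sub_rpow hzx.1 hx
  · grw [integral_rpow_norm_sub_le (hηm n).aestronglyMeasurable hηlimm.aestronglyMeasurable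
      hz.aemeasurable hzS_one (hintS n) hηlim_int, hC₀S n]
  · obtain ⟨C, hC⟩ := exists_norm_dualityMap_sub_sub_rpow_le (E := EuclideanSpace ℝ (Fin k)) zp hε
    exact ⟨C, fun n => by
      filter_upwards [hzS] with x hx using hC (z x) hx.1 hx.2 (η n x) (ηlim x)⟩

/-- Brezis–Lieb lemma, third version, for variable exponents. -/
theorem brezis_lieb_third_version_region_two
    (N k : ℕ) (hN : 1 ≤ N) (hk : 1 ≤ k)
    (z : EuclideanSpace ℝ (Fin N) → ℝ) (hz : Measurable z)
    (zm zp : ℝ) (hzm : 1 < zm)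
    (hzbound : ∀ᵐ x : EuclideanSpace ℝ (Fin N), zm ≤ z x ∧ z x ≤ zp)
    (η : ℕ → EuclideanSpace ℝ (Fin N) → EuclideanSpace ℝ (Fin k))
    (ηlim : EuclideanSpace ℝ (Fin N) → EuclideanSpace ℝ (Fin k))
    (hηm : ∀ n, Measurable (η n)) (hηlimm : Measurable ηlim)
    (hconv : ∀ᵐ x : EuclideanSpace ℝ (Fin N),
      Tendsto (fun n => η n x) atTop (𝓝 (ηlim x)))
    (hint : ∀ n, Integrable (fun x => ‖η n x‖ ^ z x))
    (hsup : ∃ C : ℝ, ∀ n, ∫ x, ‖η n x‖ ^ z x ≤ C) :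
    Tendsto
      (fun n => ∫ x in {x : EuclideanSpace ℝ (Fin N) | 2 ≤ z x},
        ‖(‖η n x‖ ^ (z x - 2)) • η n x
          - (‖η n x - ηlim x‖ ^ (z x - 2)) • (η n x - ηlim x)
          - (‖ηlim x‖ ^ (z x - 2)) • ηlim x‖ ^ (z x / (z x - 1)))
      atTop (𝓝 0) :=
  brezis_lieb_third_version_region_two_general N k z hz zm zp hzbound η ηlim hηm hηlimm hconv hint
    hsup
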